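/- arXiv:1611.05067 — 13 statements merged into one kernel-verified Lean document; each statement's English description precedes it below -/
import Mathlib

section
/- Given a short exact sequence 0 → M' → M → M'' → 0 of R-modules, if M' and M'' are S-finite then M is S-finite. -/
def IsSFinite {R : Type*} [CommRing R] (S : Submonoid R) (M : Type*) [AddCommGroup M]
    [Module R M] : Prop :=
  ∃ s ∈ S, ∃ N : Submodule R M, N.FG ∧ ∀ m : M, s • m ∈ N

theorem sfinite_of_ses {R : Type*} [CommRing R] (S : Submonoid R)
    {M₁ M₂ M₃ : Type*} [AddCommGroup M₁] [Module R M₁] [AddCommGroup M₂] [Module R M₂]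
    [AddCommGroup M₃] [Module R M₃]
    (f : M₁ →ₗ[R] M₂) (g : M₂ →ₗ[R] M₃)
    (hf : Function.Injective f) (hg : Function.Surjective g) (hfg : Function.Exact f g)
    (h₁ : IsSFinite S M₁) (h₃ : IsSFinite S M₃) : IsSFinite S M₂ := by
  obtain ⟨s₁, hs₁, N₁, hN₁fg, hN₁⟩ := h₁
  obtain ⟨s₃, hs₃, N₃, hN₃fg, hN₃⟩ := h₃
  -- choose lifts of generators of N₃
  choose lift hlift using hg
  obtain ⟨t₃, ht₃⟩ := hN₃fg
  classical
  refine ⟨s₁ * s₃, S.mul_mem hs₁ hs₃,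
    N₁.map f ⊔ Submodule.span R (lift '' (t₃ : Set M₃)), ?_, ?_⟩
  · exact Submodule.FG.sup (hN₁fg.map f) ⟨t₃.image lift, by rw [Finset.coe_image]⟩
  · intro m
    have hgm : s₃ • g m ∈ N₃ := hN₃ (g m)
    rw [← ht₃] at hgm
    -- write s₃ • g m in span of lifts, pushed through g
    have : s₃ • g m ∈ Submodule.map g (Submodule.span R (lift '' (t₃ : Set M₃))) := by
      rw [Submodule.map_span, ← Set.image_comp]
      have h : (⇑g ∘ lift) '' (t₃ : Set M₃) = (t₃ : Set M₃) := by
        ext x; simp [Function.comp, hlift]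
      rw [h]; exact hgm
    obtain ⟨n, hn, hgn⟩ := this
    have hker : g (s₃ • m - n) = 0 := by
      rw [map_sub, map_smul, hgn, sub_self]
    obtain ⟨m₁, hm₁⟩ := (hfg (s₃ • m - n)).mp hker
    have : (s₁ * s₃) • m = f (s₁ • m₁) + s₁ • n := by
      rw [map_smul, hm₁, mul_smul, smul_sub, sub_add_cancel]
    rw [this]
    exact Submodule.add_mem _
      (Submodule.mem_sup_left ⟨s₁ • m₁, hN₁ m₁, rfl⟩)
      (Submodule.mem_sup_right (Submodule.smul_mem _ _ hn))
end

section
/- Given a short exact sequence 0 → M' → M → M'' → 0 of R-modules, if M' and M'' are S-finitely presented then M is S-finitely presented. -/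
def IsSFinitelyPresented {R : Type*} [CommRing R] (S : Submonoid R) (M : Type*)
    [AddCommGroup M] [Module R M] : Prop :=
  ∃ (n : ℕ) (f : (Fin n → R) →ₗ[R] M), Function.Surjective f ∧ IsSFinite S (LinearMap.ker f)

lemma isSFinite_of_surjective {R : Type*} [CommRing R] (S : Submonoid R) {M N : Type*}
    [AddCommGroup M] [Module R M] [AddCommGroup N] [Module R N]
    (φ : M →ₗ[R] N) (hφ : Function.Surjective φ) (h : IsSFinite S M) : IsSFinite S N := by
  obtain ⟨s, hs, K, hK, hmem⟩ := h
  refine ⟨s, hs, K.map φ, hK.map φ, fun n => ?_⟩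
  obtain ⟨m, rfl⟩ := hφ n
  exact ⟨s • m, hmem m, map_smul φ s m⟩

lemma isSFinite_ext {R : Type*} [CommRing R] (S : Submonoid R) {B C : Type*}
    [AddCommGroup B] [Module R B] [AddCommGroup C] [Module R C]
    (b : B →ₗ[R] C) (h1 : IsSFinite S (LinearMap.ker b))
    (h2 : IsSFinite S (LinearMap.range b)) : IsSFinite S B := by
  classical
  obtain ⟨s₁, hs₁, N₁, hN₁, hmem₁⟩ := h1
  obtain ⟨s₃, hs₃, N₃, hN₃, hmem₃⟩ := h2
  obtain ⟨T, hT⟩ := hN₃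
  choose u hu using fun x : LinearMap.range b => x.2
  set W : Submodule R B := Submodule.span R (u '' ↑T) with hW
  refine ⟨s₁ * s₃, S.mul_mem hs₁ hs₃, W ⊔ N₁.map (LinearMap.ker b).subtype, ?_, fun m => ?_⟩
  · exact Submodule.FG.sup ⟨T.image u, by rw [Finset.coe_image]⟩ (hN₁.map _)
  · have h2' : (s₃ • (⟨b m, LinearMap.mem_range_self b m⟩ : LinearMap.range b)) ∈
        Submodule.span R (↑T : Set (LinearMap.range b)) := hT ▸ hmem₃ _
    have h3 : s₃ • b m ∈ Submodule.span R (Subtype.val '' (↑T : Set (LinearMap.range b))) := by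
      have := Submodule.mem_map_of_mem (f := (LinearMap.range b).subtype) h2'
      rwa [Submodule.map_span] at this
    have hmapW : Submodule.map b W = Submodule.span R
        (Subtype.val '' (↑T : Set (LinearMap.range b))) := by
      rw [hW, Submodule.map_span, ← Set.image_comp]
      congr 1
      ext x
      simp only [Set.mem_image, Function.comp_apply]
      constructor
      · rintro ⟨t, ht, rfl⟩; exact ⟨t, ht, (hu t).symm⟩
      · rintro ⟨t, ht, rfl⟩; exact ⟨t, ht, hu t⟩
    have hbm : s₃ • b m ∈ Submodule.map b W := by rw [hmapW]; exact h3
    obtain ⟨w, hwW, hw⟩ := hbm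
    have hker : s₃ • m - w ∈ LinearMap.ker b := by
      rw [LinearMap.mem_ker, map_sub, map_smul, hw, sub_self]
    have h4 := hmem₁ ⟨s₃ • m - w, hker⟩
    have h5 : s₁ • (s₃ • m - w) ∈ N₁.map (LinearMap.ker b).subtype :=
      ⟨s₁ • (⟨s₃ • m - w, hker⟩ : LinearMap.ker b), h4, rfl⟩
    have key : (s₁ * s₃) • m = s₁ • (s₃ • m - w) + s₁ • w := by
      rw [smul_sub, mul_smul]; abel
    rw [key]
    exact Submodule.add_mem _ (Submodule.mem_sup_right h5)
      (Submodule.mem_sup_left (Submodule.smul_mem _ _ hwW))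

theorem sfp_of_ses {R : Type*} [CommRing R] (S : Submonoid R)
    {M₁ M₂ M₃ : Type*} [AddCommGroup M₁] [Module R M₁] [AddCommGroup M₂] [Module R M₂]
    [AddCommGroup M₃] [Module R M₃]
    (f : M₁ →ₗ[R] M₂) (g : M₂ →ₗ[R] M₃)
    (hf : Function.Injective f) (hg : Function.Surjective g) (hfg : Function.Exact f g)
    (h₁ : IsSFinitelyPresented S M₁) (h₃ : IsSFinitelyPresented S M₃) :
    IsSFinitelyPresented S M₂ := by
  obtain ⟨n₁, f₁, hf₁, hk₁⟩ := h₁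
  obtain ⟨n₃, f₃, hf₃, hk₃⟩ := h₃
  obtain ⟨σ, hσ⟩ := Module.projective_lifting_property g f₃ hg
  -- the combined surjection on the product
  set P : ((Fin n₁ → R) × (Fin n₃ → R)) →ₗ[R] M₂ :=
    (f ∘ₗ f₁) ∘ₗ LinearMap.fst R _ _ + σ ∘ₗ LinearMap.snd R _ _ with hP
  have hPapp : ∀ x y, P (x, y) = f (f₁ x) + σ y := fun x y => rfl
  have hPsurj : Function.Surjective P := by
    intro m
    obtain ⟨y, hy⟩ := hf₃ (g m)
    have hgy : g (m - σ y) = 0 := by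
      have : g (σ y) = f₃ y := by rw [← hσ]; rfl
      rw [map_sub, this, hy, sub_self]
    obtain ⟨m₁, hm₁⟩ := (hfg _).mp hgy
    obtain ⟨x, hx⟩ := hf₁ m₁
    exact ⟨(x, y), by rw [hPapp, hx, hm₁]; abel⟩
  -- gσf = f₃ pointwise
  have hgσ : ∀ y, g (σ y) = f₃ y := fun y => by rw [← hσ]; rfl
  have hgf : ∀ m, g (f m) = 0 := fun m => hfg.apply_apply_eq_zero m
  -- snd map on ker P
  set b : ↥(LinearMap.ker P) →ₗ[R] (Fin n₃ → R) :=
    (LinearMap.snd R _ _) ∘ₗ (LinearMap.ker P).subtype with hb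
  have hkerP : IsSFinite S (LinearMap.ker P) := by
    apply isSFinite_ext S b
    · -- ker b is the image of ker f₁
      have hin : ∀ x : ↥(LinearMap.ker f₁), ((x : Fin n₁ → R), (0 : Fin n₃ → R)) ∈
          LinearMap.ker P := by
        intro x
        rw [LinearMap.mem_ker, hPapp]
        have : f₁ (x : Fin n₁ → R) = 0 := x.2
        rw [this, map_zero, map_zero, add_zero]
      set φ₀ : ↥(LinearMap.ker f₁) →ₗ[R] ↥(LinearMap.ker P) :=
        ((LinearMap.inl R _ _) ∘ₗ (LinearMap.ker f₁).subtype).codRestrict _ hin with hφ₀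
      have hφ₀b : ∀ x, b (φ₀ x) = 0 := fun x => rfl
      set φ : ↥(LinearMap.ker f₁) →ₗ[R] ↥(LinearMap.ker b) :=
        φ₀.codRestrict _ (fun x => by rw [LinearMap.mem_ker]; exact hφ₀b x) with hφ
      refine isSFinite_of_surjective S φ ?_ hk₁
      rintro ⟨⟨⟨x₁, x₃⟩, hxP⟩, hxb⟩
      have hx₃ : x₃ = 0 := hxb
      subst hx₃
      rw [LinearMap.mem_ker, hPapp, map_zero, add_zero] at hxP
      have hx₁ : x₁ ∈ LinearMap.ker f₁ := by
        rw [LinearMap.mem_ker]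
        exact hf (by rw [hxP, map_zero])
      exact ⟨⟨x₁, hx₁⟩, rfl⟩
    · -- range b = ker f₃
      have hrange : LinearMap.range b = LinearMap.ker f₃ := by
        ext y
        constructor
        · rintro ⟨⟨⟨x₁, x₃⟩, hxP⟩, rfl⟩
          rw [LinearMap.mem_ker] at hxP ⊢
          rw [hPapp] at hxP
          have : b ⟨(x₁, x₃), by rw [LinearMap.mem_ker, hPapp]; exact hxP⟩ = x₃ := rfl
          show f₃ x₃ = 0
          have hσx : σ x₃ = -f (f₁ x₁) := by
            rw [eq_neg_iff_add_eq_zero]; rw [add_comm] at hxP; exact hxP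
          rw [← hgσ, hσx, map_neg, hgf, neg_zero]
        · intro hy
          rw [LinearMap.mem_ker] at hy
          have hgσy : g (σ y) = 0 := by rw [hgσ, hy]
          obtain ⟨m₁, hm₁⟩ := (hfg _).mp hgσy
          obtain ⟨x, hx⟩ := hf₁ (-m₁)
          have hmem : ((x, y) : (Fin n₁ → R) × (Fin n₃ → R)) ∈ LinearMap.ker P := by
            rw [LinearMap.mem_ker, hPapp, hx, map_neg, hm₁]; abel
          exact ⟨⟨(x, y), hmem⟩, rfl⟩
      rw [hrange]
      exact hk₃
  -- transport along the equivalence (Fin (n₁+n₃) → R) ≃ product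
  set e : (Fin (n₁ + n₃) → R) ≃ₗ[R] ((Fin n₁ → R) × (Fin n₃ → R)) :=
    (LinearEquiv.funCongrLeft R R finSumFinEquiv).trans
      (LinearEquiv.sumArrowLequivProdArrow _ _ R R) with he
  refine ⟨n₁ + n₃, P ∘ₗ e.toLinearMap, hPsurj.comp e.surjective, ?_⟩
  have hin : ∀ x : ↥(LinearMap.ker P),
      e.symm (x : (Fin n₁ → R) × (Fin n₃ → R)) ∈ LinearMap.ker (P ∘ₗ e.toLinearMap) := by
    intro x
    rw [LinearMap.mem_ker, LinearMap.comp_apply]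
    simp only [LinearEquiv.coe_coe, LinearEquiv.apply_symm_apply]
    exact x.2
  set ψ : ↥(LinearMap.ker P) →ₗ[R] ↥(LinearMap.ker (P ∘ₗ e.toLinearMap)) :=
    (e.symm.toLinearMap ∘ₗ (LinearMap.ker P).subtype).codRestrict _ hin with hψ
  refine isSFinite_of_surjective S ψ ?_ hkerP
  rintro ⟨y, hy⟩
  have hy' : e y ∈ LinearMap.ker P := hy
  refine ⟨⟨e y, hy'⟩, ?_⟩
  apply Subtype.ext
  show e.symm (e y) = y
  exact e.symm_apply_apply y
end

section
/- Given a short exact sequence 0 → M' → M → M'' → 0 of R-modules, if M' is S-finite and M is S-finitely presented then M'' is S-finitely presented. -/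
theorem sfp_quotient_of_ses {R : Type*} [CommRing R] (S : Submonoid R)
    {M₁ M₂ M₃ : Type*} [AddCommGroup M₁] [Module R M₁] [AddCommGroup M₂] [Module R M₂]
    [AddCommGroup M₃] [Module R M₃]
    (f : M₁ →ₗ[R] M₂) (g : M₂ →ₗ[R] M₃)
    (hf : Function.Injective f) (hg : Function.Surjective g) (hfg : Function.Exact f g)
    (h₁ : IsSFinite S M₁) (h₂ : IsSFinitelyPresented S M₂) :
    IsSFinitelyPresented S M₃ := by
  obtain ⟨s₁, hs₁, N₁, hN₁fg, hN₁⟩ := h₁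
  obtain ⟨n, p, hp, s₂, hs₂, N₂, hN₂fg, hN₂⟩ := h₂
  refine ⟨n, g ∘ₗ p, hg.comp hp, s₂ * s₁, mul_mem hs₂ hs₁, ?_⟩
  -- choose preimages
  choose q hq using hp
  obtain ⟨T, hT⟩ := hN₁fg
  set K := LinearMap.ker (g ∘ₗ p) with hK
  set N₂' : Submodule R (Fin n → R) := N₂.map (LinearMap.ker p).subtype with hN₂'
  set N' : Submodule R (Fin n → R) :=
    Submodule.span R ((fun m => q (f m)) '' (T : Set M₁)) ⊔ N₂' with hN'def
  have hkerle : LinearMap.ker p ≤ K := by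
    intro x hx
    simp only [hK, LinearMap.mem_ker, LinearMap.comp_apply] at *
    rw [hx, map_zero]
  have hle : N' ≤ K := by
    refine sup_le ?_ ?_
    · rw [Submodule.span_le]
      rintro _ ⟨m, _, rfl⟩
      simp only [hK, SetLike.mem_coe, LinearMap.mem_ker, LinearMap.comp_apply, hq]
      exact (hfg (f m)).mpr ⟨m, rfl⟩
    · rintro _ ⟨x, _, rfl⟩
      exact hkerle x.2
  refine ⟨N'.comap K.subtype, ?_, ?_⟩
  · have hN'fg : N'.FG := by
      classical
      refine Submodule.FG.sup ⟨T.image (fun m => q (f m)), by rw [Finset.coe_image]⟩ (hN₂fg.map _)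
    have : Module.Finite R N' := Module.Finite.iff_fg.mpr hN'fg
    exact Module.Finite.iff_fg.mp
      (Module.Finite.equiv (Submodule.comapSubtypeEquivOfLe hle).symm)
  · rintro ⟨x, hx⟩
    simp only [hK, LinearMap.mem_ker, LinearMap.comp_apply] at hx
    obtain ⟨m, hm⟩ := (hfg (p x)).mp hx
    have hm1 : s₁ • m ∈ Submodule.span R (T : Set M₁) := by rw [hT]; exact hN₁ m
    have hmap : f (s₁ • m) ∈
        (Submodule.span R ((fun m => q (f m)) '' (T : Set M₁))).map p := by
      rw [Submodule.map_span]
      have : p '' ((fun m => q (f m)) '' (T : Set M₁)) = f '' (T : Set M₁) := by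
        ext y
        constructor
        · rintro ⟨_, ⟨m', hm', rfl⟩, rfl⟩; exact ⟨m', hm', (hq (f m')).symm ▸ rfl⟩
        · rintro ⟨m', hm', rfl⟩; exact ⟨q (f m'), ⟨m', hm', rfl⟩, hq (f m')⟩
      rw [this, ← Submodule.map_span]
      exact ⟨s₁ • m, hm1, rfl⟩
    obtain ⟨y, hy, hpy⟩ := hmap
    have hker : s₁ • x - y ∈ LinearMap.ker p := by
      simp only [LinearMap.mem_ker, map_sub, map_smul, hm, hpy, sub_self]
    have h2 : s₂ • (s₁ • x - y) ∈ N₂' := ⟨s₂ • (⟨_, hker⟩ : LinearMap.ker p),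
      hN₂ _, rfl⟩
    have hy2 : s₂ • y ∈ Submodule.span R ((fun m => q (f m)) '' (T : Set M₁)) :=
      Submodule.smul_mem _ _ hy
    simp only [Submodule.mem_comap, Submodule.coe_subtype, hN'def]
    have heq : (s₂ * s₁) • x = s₂ • y + s₂ • (s₁ • x - y) := by
      rw [smul_sub, mul_smul]; abel
    show ((s₂ * s₁) • (⟨x, _⟩ : K) : K).1 ∈ _
    simp only [SetLike.val_smul]
    rw [heq]
    exact Submodule.add_mem _ (Submodule.mem_sup_left hy2) (Submodule.mem_sup_right h2)
end

section
/- Given a short exact sequence 0 → M' → M → M'' → 0 of R-modules, if M'' is S-finitely presented and M is S-finite then M' is S-finite. -/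
theorem sfinite_kernel_of_ses {R : Type*} [CommRing R] (S : Submonoid R)
    {M₁ M₂ M₃ : Type*} [AddCommGroup M₁] [Module R M₁] [AddCommGroup M₂] [Module R M₂]
    [AddCommGroup M₃] [Module R M₃]
    (f : M₁ →ₗ[R] M₂) (g : M₂ →ₗ[R] M₃)
    (hf : Function.Injective f) (hg : Function.Surjective g) (hfg : Function.Exact f g)
    (h₃ : IsSFinitelyPresented S M₃) (h₂ : IsSFinite S M₂) : IsSFinite S M₁ := by
  obtain ⟨n, π, hπ, t, htS, K₀, hK₀fg, hK₀⟩ := h₃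
  obtain ⟨s, hsS, N, hNfg, hN⟩ := h₂
  obtain ⟨T, hTfin, hT⟩ := Submodule.fg_def.mp hNfg
  obtain ⟨U, hUfin, hU⟩ := Submodule.fg_def.mp hK₀fg
  -- construct a lift φ : Rⁿ → M₂ with g ∘ φ = π
  set B := Pi.basisFun R (Fin n) with hB
  set φ : (Fin n → R) →ₗ[R] M₂ := B.constr R fun i => Function.surjInv hg (π (B i)) with hφdef
  have hgφ : ∀ z, g (φ z) = π z := by
    have h : g ∘ₗ φ = π := by
      apply B.ext
      intro i
      simp only [LinearMap.comp_apply, hφdef, Module.Basis.constr_basis]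
      exact Function.surjInv_eq hg _
    intro z
    exact DFunLike.congr_fun h z
  -- lift of g along π
  set σ : M₂ → (Fin n → R) := fun x => Function.surjInv hπ (g x) with hσdef
  have hσ : ∀ x, π (σ x) = g x := fun x => Function.surjInv_eq hπ _
  -- the key finitely generated submodule of M₂
  set P : Submodule R M₂ :=
    Submodule.span R ((fun x => x - φ (σ x)) '' T ∪ (fun k : LinearMap.ker π => φ k) '' U)
    with hPdef
  have hPfg : P.FG :=
    Submodule.fg_def.mpr ⟨_, (hTfin.image _).union (hUfin.image _), rfl⟩
  -- P ≤ range f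
  have hPle : P ≤ LinearMap.range f := by
    rw [hPdef, Submodule.span_le]
    rintro y (⟨x, hx, rfl⟩ | ⟨k, hk, rfl⟩)
    · have : g (x - φ (σ x)) = 0 := by
        rw [map_sub, hgφ, hσ, sub_self]
      exact (hfg _).mp this
    · have : g (φ (k : Fin n → R)) = 0 := by
        rw [hgφ]
        exact k.2
      exact (hfg _).mp this
  -- Claim A: every y ∈ N decomposes
  have claimA : ∀ y ∈ N, ∃ z : Fin n → R, π z = g y ∧ y - φ z ∈ P := by
    intro y hy
    rw [← hT] at hy
    induction hy using Submodule.span_induction with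
    | mem x hx =>
        exact ⟨σ x, hσ x, Submodule.subset_span (Or.inl ⟨x, hx, rfl⟩)⟩
    | zero => exact ⟨0, by simp, by simp⟩
    | add x y hx hy ihx ihy =>
        obtain ⟨z1, hz1, hz1'⟩ := ihx
        obtain ⟨z2, hz2, hz2'⟩ := ihy
        refine ⟨z1 + z2, by rw [map_add, map_add, hz1, hz2], ?_⟩
        have : x + y - φ (z1 + z2) = (x - φ z1) + (y - φ z2) := by
          rw [map_add]; abel
        rw [this]
        exact P.add_mem hz1' hz2'
    | smul a x hx ihx =>
        obtain ⟨z, hz, hz'⟩ := ihx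
        refine ⟨a • z, by rw [map_smul, map_smul, hz], ?_⟩
        have : a • x - φ (a • z) = a • (x - φ z) := by
          rw [map_smul, smul_sub]
        rw [this]
        exact P.smul_mem a hz'
  -- Claim B: φ maps K₀ into P
  have claimB : ∀ w ∈ K₀, φ (w : Fin n → R) ∈ P := by
    intro w hw
    rw [← hU] at hw
    induction hw using Submodule.span_induction with
    | mem x hx => exact Submodule.subset_span (Or.inr ⟨x, hx, rfl⟩)
    | zero => simp
    | add x y hx hy ihx ihy =>
        have : φ ((x + y : LinearMap.ker π) : Fin n → R) = φ x + φ y := by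
          simp [map_add]
        rw [this]; exact P.add_mem ihx ihy
    | smul a x hx ihx =>
        have : φ ((a • x : LinearMap.ker π) : Fin n → R) = a • φ x := by
          simp [map_smul]
        rw [this]; exact P.smul_mem a ihx
  refine ⟨t * s, S.mul_mem htS hsS, Submodule.comap f P, ?_, ?_⟩
  · apply Submodule.fg_of_fg_map_injective f hf
    rwa [Submodule.map_comap_eq, inf_eq_right.mpr hPle]
  · intro m
    have hgfm : g (f m) = 0 := (hfg (f m)).mpr ⟨m, rfl⟩
    obtain ⟨z, hz, hz'⟩ := claimA (s • f m) (hN (f m))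
    have hzker : z ∈ LinearMap.ker π := by
      rw [LinearMap.mem_ker, hz, map_smul, hgfm, smul_zero]
    have hB := claimB _ (hK₀ ⟨z, hzker⟩)
    have hcoe : ((t • (⟨z, hzker⟩ : LinearMap.ker π) : LinearMap.ker π) : Fin n → R) = t • z :=
      rfl
    rw [hcoe] at hB
    have : f ((t * s) • m) = t • (s • f m - φ z) + φ (t • z) := by
      simp only [map_smul, mul_smul, smul_sub]
      abel
    show f ((t * s) • m) ∈ P
    rw [this]
    exact P.add_mem (P.smul_mem t hz') hB
end

section
/- Let N₁ and N₂ be S-finitely presented submodules of an R-module M. Then N₁ + N₂ is S-finitely presented if and only if N₁ ∩ N₂ is S-finite. -/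
section aux
variable {R : Type*} [CommRing R] (S : Submonoid R) {M M' : Type*} [AddCommGroup M] [Module R M]
  [AddCommGroup M'] [Module R M']

/-- A submodule is `S`-finitely generated. -/
def SFG (P : Submodule R M) : Prop :=
  ∃ s ∈ S, ∃ Q : Submodule R M, Q.FG ∧ Q ≤ P ∧ ∀ x ∈ P, s • x ∈ Q

theorem sfg_iff (P : Submodule R M) : SFG S P ↔ IsSFinite S ↥P := by
  constructor
  · rintro ⟨s, hs, Q, hQfg, hQP, h⟩
    refine ⟨s, hs, Submodule.comap P.subtype Q, ?_, ?_⟩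
    · apply Submodule.fg_of_fg_map_injective P.subtype P.injective_subtype
      rwa [Submodule.map_comap_eq, Submodule.range_subtype, inf_eq_right.mpr hQP]
    · intro m
      exact h m m.2
  · rintro ⟨s, hs, N, hNfg, h⟩
    refine ⟨s, hs, Submodule.map P.subtype N, hNfg.map _, Submodule.map_subtype_le _ _, ?_⟩
    intro x hx
    exact ⟨s • ⟨x, hx⟩, h ⟨x, hx⟩, rfl⟩

theorem sfg_top_iff : SFG S (⊤ : Submodule R M) ↔ IsSFinite S M := by
  constructor
  · rintro ⟨s, hs, Q, hQfg, -, h⟩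
    exact ⟨s, hs, Q, hQfg, fun m => h m trivial⟩
  · rintro ⟨s, hs, N, hNfg, h⟩
    exact ⟨s, hs, N, hNfg, le_top, fun x _ => h x⟩

theorem SFG.map {P : Submodule R M} (h : SFG S P) (f : M →ₗ[R] M') : SFG S (P.map f) := by
  obtain ⟨s, hs, Q, hQfg, hQP, hQ⟩ := h
  refine ⟨s, hs, Q.map f, hQfg.map f, Submodule.map_mono hQP, ?_⟩
  rintro _ ⟨x, hx, rfl⟩
  exact ⟨s • x, hQ x hx, map_smul f s x⟩

theorem SFG.prod {P : Submodule R M} {P' : Submodule R M'} (h : SFG S P) (h' : SFG S P') :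
    SFG S (P.prod P') := by
  obtain ⟨s, hs, Q, hQfg, hQP, hQ⟩ := h
  obtain ⟨s', hs', Q', hQfg', hQP', hQ'⟩ := h'
  refine ⟨s * s', mul_mem hs hs', Q.prod Q', hQfg.prod hQfg', Submodule.prod_mono hQP hQP', ?_⟩
  rintro ⟨x, y⟩ ⟨hx, hy⟩
  refine ⟨?_, ?_⟩
  · show (s * s') • x ∈ Q
    rw [mul_comm, mul_smul]
    exact Q.smul_mem s' (hQ x hx)
  · show (s * s') • y ∈ Q'
    rw [mul_smul]
    exact Q'.smul_mem s (hQ' y hy)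

theorem isSFinite_of_surjective_s7 (f : M →ₗ[R] M') (hf : Function.Surjective f)
    (h : IsSFinite S M) : IsSFinite S M' := by
  rw [← sfg_top_iff] at h ⊢
  have := h.map S f
  rwa [Submodule.map_top, LinearMap.range_eq_top.mpr hf] at this

theorem sfg_comap (g : M →ₗ[R] M') (hg : Function.Surjective g)
    (hker : SFG S (LinearMap.ker g)) {K : Submodule R M'} (hK : SFG S K) :
    SFG S (K.comap g) := by
  obtain ⟨s₀, hs₀, Rm, hRfg, hRle, hR⟩ := hker
  obtain ⟨s₁, hs₁, Q, hQfg, hQK, hQ⟩ := hK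
  obtain ⟨T, hT⟩ := hQfg
  -- choose lifts of the generators of Q
  choose lift hlift using hg
  set T' : Set M := lift '' (T : Set M') with hT'
  refine ⟨s₀ * s₁, mul_mem hs₀ hs₁, Submodule.span R T' ⊔ Rm,
    (Submodule.fg_span ((T.finite_toSet).image _)).sup hRfg, ?_, ?_⟩
  · refine sup_le ?_ ?_
    · rw [Submodule.span_le]
      rintro _ ⟨t, ht, rfl⟩
      show g (lift t) ∈ K
      rw [hlift]
      exact hQK (hT ▸ Submodule.subset_span ht)
    · intro x hx
      show g x ∈ K
      rw [LinearMap.mem_ker.mp (hRle hx)]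
      exact K.zero_mem
  · intro x hx
    have hgx : s₁ • g x ∈ Q := hQ (g x) hx
    have : s₁ • g x ∈ Submodule.map g (Submodule.span R T') := by
      rw [Submodule.map_span, hT']
      have : g '' (lift '' (T : Set M')) = (T : Set M') := by
        ext y; constructor
        · rintro ⟨_, ⟨t, ht, rfl⟩, rfl⟩; rwa [hlift]
        · intro hy; exact ⟨lift y, ⟨y, hy, rfl⟩, hlift y⟩
      rw [this, hT]
      exact hgx
    obtain ⟨y, hy, hgy⟩ := this
    have hker' : s₁ • x - y ∈ LinearMap.ker g := by
      rw [LinearMap.mem_ker, map_sub, map_smul, hgy, sub_self]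
    have h1 : s₀ • (s₁ • x - y) ∈ Rm := hR _ hker'
    have : (s₀ * s₁) • x = s₀ • y + s₀ • (s₁ • x - y) := by
      rw [smul_sub, mul_smul]; abel
    rw [this]
    exact Submodule.add_mem _
      (Submodule.mem_sup_left (Submodule.smul_mem _ _ hy))
      (Submodule.mem_sup_right h1)

theorem sfg_ker_of_free {n m : ℕ} (q : (Fin n → R) →ₗ[R] M) (g : (Fin m → R) →ₗ[R] M)
    (hq : Function.Surjective q) (hg : Function.Surjective g)
    (h : SFG S (LinearMap.ker g)) : SFG S (LinearMap.ker q) := by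
  obtain ⟨α, hα⟩ := Module.projective_lifting_property g q hg
  obtain ⟨β, hβ⟩ := Module.projective_lifting_property q g hq
  obtain ⟨s, hs, Q, hQfg, hQle, hQ⟩ := h
  have hα' : ∀ x, g (α x) = q x := fun x => LinearMap.congr_fun hα x
  have hβ' : ∀ y, q (β y) = g y := fun y => LinearMap.congr_fun hβ y
  refine ⟨s, hs, LinearMap.range (LinearMap.id - β.comp α) ⊔ Q.map β, ?_, ?_, ?_⟩
  · refine Submodule.FG.sup ?_ (hQfg.map β)
    rw [← Submodule.map_top]
    exact Submodule.FG.map _ (Module.Finite.fg_top (R := R) (M := Fin n → R))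
  · refine sup_le ?_ ?_
    · rintro _ ⟨x, rfl⟩
      simp only [LinearMap.mem_ker, LinearMap.sub_apply, LinearMap.id_apply,
        LinearMap.comp_apply]
      rw [map_sub, hβ' (α x), hα' x, sub_self]
    · rintro _ ⟨y, hy, rfl⟩
      have hy' : y ∈ LinearMap.ker g := hQle hy
      rw [LinearMap.mem_ker, hβ' y]
      exact hy'
  · intro x hx
    have hαx : α x ∈ LinearMap.ker g := by
      rw [LinearMap.mem_ker, hα' x]
      exact hx
    have h1 : s • α x ∈ Q := hQ _ hαx
    have : s • x = (s • x - β (α (s • x))) + β (s • α x) := by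
      rw [map_smul]; abel
    rw [this]
    exact Submodule.add_mem_sup ⟨s • x, rfl⟩ ⟨s • α x, h1, rfl⟩

end aux

theorem sfp_sup_iff_sfinite_inf {R : Type*} [CommRing R] (S : Submonoid R)
    {M : Type*} [AddCommGroup M] [Module R M] (N₁ N₂ : Submodule R M)
    (h₁ : IsSFinitelyPresented S N₁) (h₂ : IsSFinitelyPresented S N₂) :
    IsSFinitelyPresented S ↥(N₁ ⊔ N₂) ↔ IsSFinite S ↥(N₁ ⊓ N₂) := by
  obtain ⟨n₁, f₁, hf₁, hk₁⟩ := h₁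
  obtain ⟨n₂, f₂, hf₂, hk₂⟩ := h₂
  -- the addition map from the product onto the sup
  set π : (↥N₁ × ↥N₂) →ₗ[R] ↥(N₁ ⊔ N₂) :=
    (Submodule.inclusion le_sup_left).comp (LinearMap.fst R ↥N₁ ↥N₂)
      + (Submodule.inclusion le_sup_right).comp (LinearMap.snd R ↥N₁ ↥N₂) with hπdef
  have hπapp : ∀ (x : ↥N₁) (y : ↥N₂), ((π (x, y) : ↥(N₁ ⊔ N₂)) : M) = (x : M) + (y : M) := by
    intro x y
    simp [hπdef]
  have hπ : Function.Surjective π := by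
    rintro ⟨z, hz⟩
    obtain ⟨a, ha, b, hb, rfl⟩ := Submodule.mem_sup.mp hz
    exact ⟨(⟨a, ha⟩, ⟨b, hb⟩), Subtype.ext (hπapp _ _)⟩
  -- the inclusion of the intersection as the kernel of π
  set j : ↥(N₁ ⊓ N₂) →ₗ[R] ↥N₁ × ↥N₂ :=
    (Submodule.inclusion inf_le_left).prod (-(Submodule.inclusion inf_le_right)) with hjdef
  have hjapp : ∀ a : ↥(N₁ ⊓ N₂),
      j a = (⟨(a : M), a.2.1⟩, ⟨-(a : M), N₂.neg_mem a.2.2⟩) := by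
    intro a
    refine Prod.ext (Subtype.ext ?_) (Subtype.ext ?_) <;> simp [hjdef]
  have hjinj : Function.Injective j := by
    intro a b hab
    have := congrArg (fun z => ((z.1 : ↥N₁) : M)) hab
    simp only [hjapp] at this
    exact Subtype.ext this
  have hrange : LinearMap.range j = LinearMap.ker π := by
    ext z
    constructor
    · rintro ⟨a, rfl⟩
      refine LinearMap.mem_ker.mpr (Subtype.ext ?_)
      rw [hjapp a, hπapp]
      simp
    · intro hxy
      obtain ⟨x, y⟩ := z
      have hsum : (x : M) + (y : M) = 0 := by
        have := Subtype.ext_iff.mp (LinearMap.mem_ker.mp hxy)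
        rwa [hπapp] at this
      have hx2 : (x : M) ∈ N₂ := by
        have : (x : M) = -(y : M) := eq_neg_of_add_eq_zero_left hsum
        rw [this]
        exact N₂.neg_mem y.2
      refine ⟨⟨(x : M), ⟨x.2, hx2⟩⟩, ?_⟩
      rw [hjapp]
      refine Prod.ext (Subtype.ext rfl) (Subtype.ext ?_)
      exact neg_eq_of_add_eq_zero_right hsum
  have e_inf_ker : ↥(N₁ ⊓ N₂) ≃ₗ[R] ↥(LinearMap.ker π) :=
    (LinearEquiv.ofInjective j hjinj).trans (LinearEquiv.ofEq _ _ hrange)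
  -- the free presentation of the product
  set e : (Fin (n₁ + n₂) → R) ≃ₗ[R] (Fin n₁ → R) × (Fin n₂ → R) :=
    (LinearEquiv.funCongrLeft R R finSumFinEquiv).trans
      (LinearEquiv.sumArrowLequivProdArrow (Fin n₁) (Fin n₂) R R) with hedef
  set p : (Fin (n₁ + n₂) → R) →ₗ[R] ↥N₁ × ↥N₂ := (f₁.prodMap f₂).comp e.toLinearMap with hpdef
  have hp : Function.Surjective p := by
    rw [hpdef, LinearMap.coe_comp]
    refine Function.Surjective.comp ?_ e.surjective
    rw [LinearMap.coe_prodMap]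
    exact hf₁.prodMap hf₂
  have hkerp : SFG S (LinearMap.ker p) := by
    have h1 : SFG S (LinearMap.ker (f₁.prodMap f₂)) := by
      rw [LinearMap.ker_prodMap]
      exact SFG.prod S ((sfg_iff S _).mpr hk₁) ((sfg_iff S _).mpr hk₂)
    rw [hpdef, LinearMap.ker_comp, Submodule.comap_equiv_eq_map_symm]
    exact SFG.map S h1 _
  set q : (Fin (n₁ + n₂) → R) →ₗ[R] ↥(N₁ ⊔ N₂) := π.comp p with hqdef
  have hq : Function.Surjective q := by
    rw [hqdef, LinearMap.coe_comp]
    exact hπ.comp hp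
  have hkerq_eq : LinearMap.ker q = Submodule.comap p (LinearMap.ker π) :=
    LinearMap.ker_comp p π
  constructor
  · rintro ⟨m, g, hg, hkerg⟩
    have hkergS : SFG S (LinearMap.ker g) := (sfg_iff S _).mpr hkerg
    have hq' : SFG S (LinearMap.ker q) := sfg_ker_of_free S q g hq hg hkergS
    have hker : SFG S (LinearMap.ker π) := by
      rw [hkerq_eq] at hq'
      have h2 := SFG.map S hq' p
      rwa [Submodule.map_comap_eq, LinearMap.range_eq_top.mpr hp, top_inf_eq] at h2
    exact isSFinite_of_surjective_s7 S e_inf_ker.symm.toLinearMap e_inf_ker.symm.surjective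
      ((sfg_iff S _).mp hker)
  · intro hinf
    refine ⟨n₁ + n₂, q, hq, ?_⟩
    rw [← sfg_iff, hkerq_eq]
    apply sfg_comap S p hp hkerp
    rw [← hrange, ← Submodule.map_top]
    exact SFG.map S ((sfg_top_iff S).mpr hinf) j
end

section
/- Let φ : A → B be a ring homomorphism making B a finitely generated A-module, and let V be a multiplicative subset of A with 0 ∉ φ(V). If a B-module M is V-finitely presented as an A-module, then M is φ(V)-finitely presented as a B-module. -/
/-! Write `φ : A → B`. Choose a surjection `g : Bᵐ → M` and an `A`-linear surjection
`Q : Aᵏ → Bᵐ`; then `g ∘ Q : Aᵏ → M` is a second finite free `A`-presentation of `M`. As in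
Schanuel's lemma, lifts `w`, `t` between the two presentations show that `s • ker (g ∘ Q)` lies in
the finitely generated `range (1 - t ∘ w) + t(N)` whenever `s • ker f ⊆ N`. The surjection `Q`
carries `ker (g ∘ Q)` onto `ker g`, so `s • ker g` lies in a finitely generated `A`-submodule,
whose `B`-span witnesses that `ker g` is `φ(V)`-finite. -/

theorem isSFinite_submodule_iff {R M : Type*} [CommRing R] [AddCommGroup M] [Module R M]
    (S : Submonoid R) (K : Submodule R M) :
    IsSFinite S K ↔ ∃ s ∈ S, ∃ N : Submodule R M, N.FG ∧ N ≤ K ∧ ∀ x ∈ K, s • x ∈ N := by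
  constructor
  · rintro ⟨s, hs, N, hNfg, hN⟩
    exact ⟨s, hs, N.map K.subtype, hNfg.map _, Submodule.map_subtype_le K N,
      fun x hx => ⟨s • ⟨x, hx⟩, hN _, rfl⟩⟩
  · rintro ⟨s, hs, N, hNfg, hNK, hN⟩
    refine ⟨s, hs, N.comap K.subtype, ?_, fun x => hN x x.2⟩
    apply Submodule.fg_of_fg_map_injective K.subtype K.injective_subtype
    rwa [Submodule.map_comap_subtype, inf_of_le_right hNK]

theorem IsSFinite.of_comap_surjective {R P P' : Type*} [CommRing R] [AddCommGroup P]
    [Module R P] [AddCommGroup P'] [Module R P'] {S : Submonoid R} {Q : P →ₗ[R] P'}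
    (hQ : Function.Surjective Q) {K : Submodule R P'} (hK : IsSFinite S (K.comap Q)) :
    IsSFinite S K := by
  obtain ⟨s, hs, N, hNfg, hNK, hN⟩ := (isSFinite_submodule_iff S _).1 hK
  refine (isSFinite_submodule_iff S K).2 ⟨s, hs, N.map Q, hNfg.map Q,
    Submodule.map_le_iff_le_comap.2 hNK, fun x hx => ?_⟩
  obtain ⟨p, rfl⟩ := hQ x
  exact ⟨s • p, hN p hx, map_smul Q s p⟩

theorem IsSFinite.of_restrictScalars {A B P : Type*} [CommRing A] [CommRing B] [Algebra A B]
    [AddCommGroup P] [Module A P] [Module B P] [IsScalarTower A B P] {V : Submonoid A}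
    {K : Submodule B P} (hK : IsSFinite V (K.restrictScalars A)) :
    IsSFinite (V.map (algebraMap A B).toMonoidHom) K := by
  obtain ⟨s, hs, N, ⟨T, rfl⟩, hNK, hN⟩ := (isSFinite_submodule_iff V (K.restrictScalars A)).1 hK
  refine (isSFinite_submodule_iff _ K).2 ⟨algebraMap A B s, Submonoid.mem_map_of_mem _ hs,
    Submodule.span B (T : Set P), ⟨T, rfl⟩, ?_, fun x hx => ?_⟩
  · exact Submodule.span_le.2 (Submodule.subset_span.trans hNK)
  · rw [algebraMap_smul]
    exact Submodule.span_subset_span A B _ (hN x hx)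

theorem IsSFinite.ker_of_surjective {R P P' M : Type*} [CommRing R] [AddCommGroup P]
    [Module R P] [AddCommGroup P'] [Module R P'] [AddCommGroup M] [Module R M]
    [Module.Projective R P] [Module.Projective R P'] [Module.Finite R P'] {S : Submonoid R}
    {f : P →ₗ[R] M} {h : P' →ₗ[R] M} (hf : Function.Surjective f)
    (hh : Function.Surjective h) (hker : IsSFinite S (LinearMap.ker f)) :
    IsSFinite S (LinearMap.ker h) := by
  obtain ⟨s, hs, N, hNfg, hNker, hN⟩ := (isSFinite_submodule_iff S _).1 hker
  obtain ⟨w, hw⟩ := Module.projective_lifting_property f h hf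
  obtain ⟨t, ht⟩ := Module.projective_lifting_property h f hh
  have hwp : ∀ p, f (w p) = h p := LinearMap.ext_iff.1 hw
  have htp : ∀ y, h (t y) = f y := LinearMap.ext_iff.1 ht
  refine (isSFinite_submodule_iff S _).2
    ⟨s, hs, LinearMap.range (LinearMap.id - t ∘ₗ w) ⊔ N.map t, ?_, ?_, fun p hp => ?_⟩
  · rw [LinearMap.range_eq_map]
    exact (Module.Finite.fg_top.map _).sup (hNfg.map t)
  · refine sup_le ?_ (Submodule.map_le_iff_le_comap.2 fun y hy => ?_)
    · rintro _ ⟨p, rfl⟩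
      simp [htp, hwp]
    · simpa [htp] using hNker hy
  · have hwp_ker : w p ∈ LinearMap.ker f := by rwa [LinearMap.mem_ker, hwp]
    have hsplit : s • p = (s • p - t (w (s • p))) + t (s • w p) := by
      rw [map_smul]; abel
    rw [hsplit]
    exact Submodule.add_mem_sup ⟨s • p, rfl⟩ ⟨s • w p, hN _ hwp_ker, rfl⟩

theorem sfp_change_of_rings_general {A B : Type*} [CommRing A] [CommRing B] [Algebra A B]
    [Module.Finite A B] (V : Submonoid A)
    (M : Type*) [AddCommGroup M] [Module A M] [Module B M] [IsScalarTower A B M]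
    (hM : IsSFinitelyPresented V M) :
    IsSFinitelyPresented (V.map (algebraMap A B).toMonoidHom) M := by
  obtain ⟨n, f, hf, hker⟩ := hM
  have : Module.Finite A M := Module.Finite.of_surjective f hf
  have : Module.Finite B M := Module.Finite.of_restrictScalars_finite A B M
  obtain ⟨m, g, hg⟩ := Module.Finite.exists_fin' B M
  obtain ⟨k, Q, hQ⟩ := Module.Finite.exists_fin' A (Fin m → B)
  have hkerQ : IsSFinite V (LinearMap.ker (g.restrictScalars A ∘ₗ Q)) :=
    hker.ker_of_surjective hf (hg.comp hQ)
  rw [LinearMap.ker_comp] at hkerQ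
  exact ⟨m, g, hg, .of_restrictScalars (.of_comap_surjective hQ hkerQ)⟩

theorem sfp_change_of_rings {A B : Type*} [CommRing A] [CommRing B] [Algebra A B]
    [Module.Finite A B] (V : Submonoid A)
    (h0 : (0 : B) ∉ V.map (algebraMap A B).toMonoidHom)
    (M : Type*) [AddCommGroup M] [Module A M] [Module B M] [IsScalarTower A B M]
    (hM : IsSFinitelyPresented V M) :
    IsSFinitelyPresented (V.map (algebraMap A B).toMonoidHom) M :=
  sfp_change_of_rings_general V M hM
end

section
/- Let I be an ideal of R with I ∩ S = ∅ and T the induced multiplicative subset of R/I. If I is an S-finite ideal of R and an R/I-module M is T-finitely presented as an R/I-module, then M is S-finitely presented as an R-module. -/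
theorem sfp_of_tfp_quotient {R : Type*} [CommRing R] (S : Submonoid R)
    (I : Ideal R) (hIS : Disjoint (I : Set R) (S : Set R))
    (hI : IsSFinite S ↥I)
    (M : Type*) [AddCommGroup M] [Module (R ⧸ I) M] [Module R M]
    [IsScalarTower R (R ⧸ I) M]
    (hM : IsSFinitelyPresented (S.map (Ideal.Quotient.mk I).toMonoidHom) M) :
    IsSFinitelyPresented S M := by
  obtain ⟨n, g, hgsur, t, htT, K, hKfg, hK⟩ := hM
  obtain ⟨s', hs'S, rfl⟩ := htT
  obtain ⟨s, hsS, N, hNfg, hN⟩ := hI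
  set π : (Fin n → R) →ₗ[R] (Fin n → R ⧸ I) :=
    (Algebra.linearMap R (R ⧸ I)).compLeft (Fin n) with hπdef
  have hπ : ∀ (x : Fin n → R) (i : Fin n), π x i = Ideal.Quotient.mk I (x i) := by
    intro x i; rfl
  have hπsur : Function.Surjective π := by
    intro v
    choose w hw using fun i => Ideal.Quotient.mk_surjective (v i)
    exact ⟨w, funext fun i => hw i⟩
  set f : (Fin n → R) →ₗ[R] M := (g.restrictScalars R).comp π with hfdef
  have hfsur : Function.Surjective f := by
    intro m
    obtain ⟨v, hv⟩ := hgsur m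
    obtain ⟨x, hx⟩ := hπsur v
    exact ⟨x, by simp [hfdef, hx, hv]⟩
  refine ⟨n, f, hfsur, ?_⟩
  -- NR : image of N in R
  set NR : Submodule R R := N.map I.subtype with hNRdef
  have hNRI : ∀ r ∈ NR, r ∈ I := by
    rintro r ⟨m, _, rfl⟩; exact m.2
  -- KR : image of K in (Fin n → R⧸I)
  set KR : Submodule (R ⧸ I) (Fin n → R ⧸ I) := K.map (LinearMap.ker g).subtype with hKRdef
  obtain ⟨F, hF⟩ := hKfg.map (LinearMap.ker g).subtype
  set σ : (Fin n → R ⧸ I) → Fin n → R := Function.surjInv hπsur with hσdef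
  have hσ : ∀ v, π (σ v) = v := fun v => Function.surjInv_eq hπsur v
  set Y : Set (Fin n → R) := σ '' (F : Set (Fin n → R ⧸ I)) with hYdef
  set G : Submodule R (Fin n → R) :=
    Submodule.span R Y ⊔ Submodule.pi Set.univ (fun _ : Fin n => NR) with hGdef
  have hGfg : G.FG :=
    (Submodule.fg_span (F.finite_toSet.image σ)).sup
      (Submodule.fg_pi fun _ => hNfg.map _)
  have hGle : G ≤ LinearMap.ker f := by
    rw [hGdef, sup_le_iff]
    constructor
    · rw [Submodule.span_le]
      rintro _ ⟨v, hv, rfl⟩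
      have hvK : v ∈ KR := by rw [hKRdef, ← hF]; exact Submodule.subset_span hv
      obtain ⟨k, _, rfl⟩ := hvK
      simp only [SetLike.mem_coe, LinearMap.mem_ker, hfdef, LinearMap.comp_apply, hσ,
        LinearMap.coe_restrictScalars]
      exact k.2
    · intro v hv
      have : π v = 0 := by
        funext i
        rw [hπ]
        exact Ideal.Quotient.eq_zero_iff_mem.2 (hNRI _ (hv i trivial))
      simp [LinearMap.mem_ker, hfdef, this]
  have key : ∀ x ∈ LinearMap.ker f, (s * s') • x ∈ G := by
    intro x hx
    have hxg : π x ∈ LinearMap.ker g := by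
      simpa [hfdef] using hx
    have h1 : Ideal.Quotient.mk I s' • π x ∈ KR := by
      exact ⟨_, hK ⟨π x, hxg⟩, rfl⟩
    have h2 : Ideal.Quotient.mk I s' • π x ∈ Submodule.span R (F : Set (Fin n → R ⧸ I)) := by
      rw [← Submodule.restrictScalars_span R (R ⧸ I) Ideal.Quotient.mk_surjective,
        Submodule.restrictScalars_mem, hF]
      exact h1
    have hπY : π '' Y = (F : Set (Fin n → R ⧸ I)) := by
      rw [hYdef, Set.image_image]
      simp only [hσ, Set.image_id']
    have h3 : π (s' • x) ∈ Submodule.map π (Submodule.span R Y) := by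
      rw [Submodule.map_span, hπY]
      have : π (s' • x) = Ideal.Quotient.mk I s' • π x := by
        rw [map_smul, ← Ideal.Quotient.algebraMap_eq, algebraMap_smul]
      rw [this]
      exact h2
    obtain ⟨w, hw, hww⟩ := h3
    have hd : ∀ i, (s' • x - w) i ∈ I := by
      intro i
      have : π (s' • x - w) = 0 := by rw [map_sub, hww, sub_self]
      have h0 : π (s' • x - w) i = 0 := by rw [this]; rfl
      rw [hπ] at h0
      exact Ideal.Quotient.eq_zero_iff_mem.1 h0
    have hsd : s • (s' • x - w) ∈ Submodule.pi Set.univ (fun _ : Fin n => NR) := by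
      intro i _
      have := hN ⟨(s' • x - w) i, hd i⟩
      exact ⟨_, this, rfl⟩
    have : (s * s') • x = s • w + s • (s' • x - w) := by
      rw [smul_sub, mul_smul]
      abel
    rw [this, hGdef]
    exact Submodule.add_mem _
      (Submodule.mem_sup_left (Submodule.smul_mem _ _ hw))
      (Submodule.mem_sup_right hsd)
  refine ⟨s * s', mul_mem hsS hs'S, G.comap (LinearMap.ker f).subtype, ?_, ?_⟩
  · apply Submodule.fg_of_fg_map_injective (LinearMap.ker f).subtype
      (Submodule.injective_subtype _)
    rwa [Submodule.map_comap_subtype, inf_eq_right.2 hGle]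
  · intro m
    exact key m.1 m.2
end

section
/- Given a short exact sequence 0 → P → N → M → 0 of R-modules, if P is S-finite and N is S-coherent, then M is S-coherent. -/
/-- An `R`-module is `S`-coherent if it is finitely generated and every finitely generated
submodule is `S`-finitely presented. -/
def IsSCoherentModule {R : Type*} [CommRing R] (S : Submonoid R) (M : Type*)
    [AddCommGroup M] [Module R M] : Prop :=
  Module.Finite R M ∧ ∀ N : Submodule R M, N.FG → IsSFinitelyPresented S ↥N

theorem scoherent_quotient_of_ses {R : Type*} [CommRing R] (S : Submonoid R)
    {P N M : Type*} [AddCommGroup P] [Module R P] [AddCommGroup N] [Module R N]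
    [AddCommGroup M] [Module R M]
    (f : P →ₗ[R] N) (g : N →ₗ[R] M)
    (hf : Function.Injective f) (hg : Function.Surjective g) (hfg : Function.Exact f g)
    (hP : IsSFinite S P) (hN : IsSCoherentModule S N) : IsSCoherentModule S M := by
  obtain ⟨hNfin, hNcoh⟩ := hN
  obtain ⟨s, hs, P₀, hP₀fg, hP₀⟩ := hP
  constructor
  · haveI := hNfin
    exact Module.Finite.of_surjective g hg
  intro Q hQ
  obtain ⟨n, v, hv⟩ := Submodule.fg_iff_exists_fin_generating_family.mp hQ
  choose u hu using fun i => hg (v i)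
  set W : Submodule R N := Submodule.span R (Set.range u) ⊔ P₀.map f with hW
  have hWfg : W.FG := (Submodule.fg_span (Set.finite_range u)).sup (hP₀fg.map f)
  have hgW : ∀ w ∈ W, g w ∈ Q := by
    have : W ≤ Q.comap g := by
      rw [hW]
      apply sup_le
      · rw [Submodule.span_le]
        rintro _ ⟨i, rfl⟩
        simp only [SetLike.mem_coe, Submodule.mem_comap, hu i]
        rw [← hv]; exact Submodule.subset_span ⟨i, rfl⟩
      · rw [Submodule.map_le_iff_le_comap]
        intro p _
        simp only [Submodule.mem_comap]
        have h0 : g (f p) = 0 := (hfg (f p)).mpr ⟨p, rfl⟩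
        rw [h0]; exact Q.zero_mem
    exact fun w hw => this hw
  obtain ⟨m, ρ, hρsurj, t, ht, K, hKfg, hK⟩ := hNcoh W hWfg
  let glin : ↥W →ₗ[R] ↥Q := (g.comp W.subtype).codRestrict Q (fun w => hgW w w.2)
  set π : (Fin m → R) →ₗ[R] ↥Q := glin.comp ρ with hπ
  have hπcoe : ∀ x : Fin m → R, ((π x : ↥Q) : M) = g ((ρ x : N)) := fun x => rfl
  refine ⟨m, π, ?_, ?_⟩
  · rintro ⟨q, hq⟩
    have hmap : Submodule.map g (Submodule.span R (Set.range u)) = Q := by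
      rw [Submodule.map_span]
      have himg : g '' Set.range u = Set.range v := by
        rw [← Set.range_comp]
        exact congrArg Set.range (funext hu)
      rw [himg, hv]
    rw [← hmap] at hq
    obtain ⟨w, hw, hgw⟩ := hq
    obtain ⟨x, hx⟩ := hρsurj ⟨w, Submodule.mem_sup_left hw⟩
    exact ⟨x, Subtype.ext (by rw [hπcoe, hx]; exact hgw)⟩
  · obtain ⟨k, pgen, hpgen⟩ := Submodule.fg_iff_exists_fin_generating_family.mp hP₀fg
    have hfp : ∀ j, f (pgen j) ∈ W := fun j =>
      Submodule.mem_sup_right (Submodule.mem_map_of_mem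
        (by rw [← hpgen]; exact Submodule.subset_span ⟨j, rfl⟩))
    choose y hy using fun j => hρsurj ⟨f (pgen j), hfp j⟩
    have hyker : ∀ j, y j ∈ LinearMap.ker π := by
      intro j
      rw [LinearMap.mem_ker]
      apply Subtype.ext
      rw [hπcoe, hy j]
      exact (hfg (f (pgen j))).mpr ⟨pgen j, rfl⟩
    have hkerle : LinearMap.ker ρ ≤ LinearMap.ker π := by
      intro x hx
      rw [LinearMap.mem_ker] at hx ⊢
      rw [hπ, LinearMap.comp_apply, hx, map_zero]
    refine ⟨t * s, S.mul_mem ht hs,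
      Submodule.map (Submodule.inclusion hkerle) K ⊔
        Submodule.span R (Set.range fun j => (⟨y j, hyker j⟩ : ↥(LinearMap.ker π))),
      (hKfg.map _).sup (Submodule.fg_span (Set.finite_range _)), ?_⟩
    rintro ⟨z, hz⟩
    have hz' : g ((ρ z : N)) = 0 := by
      have h := congrArg Subtype.val (LinearMap.mem_ker.mp hz)
      rwa [hπcoe] at h
    obtain ⟨p, hp⟩ := (hfg ((ρ z : N))).mp hz'
    have hsp : s • p ∈ Submodule.span R (Set.range pgen) := by rw [hpgen]; exact hP₀ p
    obtain ⟨c, hc⟩ := (Submodule.mem_span_range_iff_exists_fun R).mp hsp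
    set e : Fin m → R := s • z - ∑ j, c j • y j with he
    have heker : e ∈ LinearMap.ker ρ := by
      rw [LinearMap.mem_ker]
      apply Subtype.ext
      have h1 : ((ρ e : ↥W) : N)
          = s • ((ρ z : ↥W) : N) - ∑ j, c j • ((ρ (y j) : ↥W) : N) := by
        rw [he, map_sub, map_smul, map_sum]
        simp
      rw [h1]
      have hys : ∀ j, ((ρ (y j) : ↥W) : N) = f (pgen j) := fun j => congrArg Subtype.val (hy j)
      simp only [hys, ← hp, ← map_smul f, ← map_sum f, ← map_sub f]
      rw [show s • p - ∑ j, c j • pgen j = 0 by rw [hc]; abel]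
      simp
    have hKmem := hK ⟨e, heker⟩
    rw [Submodule.mem_sup]
    refine ⟨Submodule.inclusion hkerle (t • ⟨e, heker⟩),
      Submodule.mem_map_of_mem hKmem,
      ∑ j, (t * c j) • (⟨y j, hyker j⟩ : ↥(LinearMap.ker π)), ?_, ?_⟩
    · exact Submodule.sum_mem _ fun j _ =>
        Submodule.smul_mem _ _ (Submodule.subset_span ⟨j, rfl⟩)
    · apply Subtype.ext
      have h1 : ((Submodule.inclusion hkerle (t • ⟨e, heker⟩) : ↥(LinearMap.ker π)) : Fin m → R)
          = t • e := rfl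
      have h2 : ((Submodule.inclusion hkerle (t • ⟨e, heker⟩)
          + ∑ j, (t * c j) • (⟨y j, hyker j⟩ : ↥(LinearMap.ker π)) : ↥(LinearMap.ker π)) :
          Fin m → R) = t • e + ∑ j, (t * c j) • y j := by
        push_cast [h1]
        rfl
      rw [h2, he]
      have h3 : (((t * s) • (⟨z, hz⟩ : ↥(LinearMap.ker π)) : ↥(LinearMap.ker π)) : Fin m → R)
          = (t * s) • z := rfl
      rw [h3]
      rw [smul_sub, Finset.smul_sum]
      simp only [smul_smul]
      abel
end

section
/- A ring R is S-coherent if and only if (0 : a) is an S-finite ideal of R for every a ∈ R and the intersection of any two finitely generated ideals of R is an S-finite ideal of R. -/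
/-- An ideal `I` is `S`-finite: `s • I ⊆ J ⊆ I` for some finitely generated ideal `J`, `s ∈ S`. -/
def IsSFiniteIdeal {R : Type*} [CommRing R] (S : Submonoid R) (I : Ideal R) : Prop :=
  ∃ s ∈ S, ∃ J : Ideal R, J.FG ∧ J ≤ I ∧ ∀ x ∈ I, s * x ∈ J

/-- `R` is `S`-coherent if every finitely generated ideal is `S`-finitely presented. -/
def IsSCoherentRing (R : Type*) [CommRing R] (S : Submonoid R) : Prop :=
  ∀ I : Ideal R, I.FG → IsSFinitelyPresented S ↥I

/-! Everything rests on two exact sequences, `0 → I ⊓ J → I × J → I ⊔ J → 0` with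
`(x, y) ↦ x + y`, and `0 → (0 : a) → R → Ra → 0`. S-finitely presented modules are closed under
finite products and under quotients by S-finite submodules, and conversely a surjection from a
finitely generated module onto an S-finitely presented one has S-finite kernel. If `R` is
S-coherent, the two sequences therefore make `(0 : a)` and `I ⊓ J` S-finite; conversely, adding
the generators of a finitely generated ideal one at a time, the same sequences show that it is
S-finitely presented.
-/

open Function LinearMap Submodule

section IsSFinite

variable {R : Type*} [CommRing R] (S : Submonoid R) {M N : Type*}
  [AddCommGroup M] [Module R M] [AddCommGroup N] [Module R N]

theorem IsSFinite.of_finite [Module.Finite R M] : IsSFinite S M :=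
  ⟨1, S.one_mem, ⊤, Module.Finite.fg_top, fun _ => mem_top⟩

variable {S}

theorem IsSFinite.of_surjective (h : IsSFinite S M) (f : M →ₗ[R] N) (hf : Surjective f) :
    IsSFinite S N := by
  obtain ⟨s, hs, P, hP, hsP⟩ := h
  refine ⟨s, hs, P.map f, hP.map f, fun n => ?_⟩
  obtain ⟨m, rfl⟩ := hf n
  rw [← map_smul]
  exact mem_map_of_mem (hsP m)

theorem isSFinite_congr (e : M ≃ₗ[R] N) : IsSFinite S M ↔ IsSFinite S N :=
  ⟨fun h => h.of_surjective e e.surjective, fun h => h.of_surjective e.symm e.symm.surjective⟩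

theorem IsSFinite.prod (hM : IsSFinite S M) (hN : IsSFinite S N) : IsSFinite S (M × N) := by
  obtain ⟨s, hs, P, hP, hsP⟩ := hM
  obtain ⟨t, ht, Q, hQ, htQ⟩ := hN
  refine ⟨s * t, S.mul_mem hs ht, P.prod Q, hP.prod hQ, fun x => mem_prod.mpr ⟨?_, ?_⟩⟩
  · rw [Prod.smul_fst, mul_comm, mul_smul]
    exact P.smul_mem t (hsP x.1)
  · rw [Prod.smul_snd, mul_smul]
    exact Q.smul_mem s (htQ x.2)

theorem Submodule.FG.exists_fg_map_eq {f : M →ₗ[R] N} (hf : Surjective f) {P : Submodule R N}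
    (hP : P.FG) : ∃ P₀ : Submodule R M, P₀.FG ∧ P₀.map f = P := by
  classical
  obtain ⟨t, rfl⟩ := hP
  refine ⟨span R (t.image (surjInv hf)), fg_span (Finset.finite_toSet _), ?_⟩
  rw [map_span, Finset.coe_image, Set.image_image]
  simp only [surjInv_eq hf, Set.image_id']

theorem IsSFinite.of_isSFinite_ker {f : M →ₗ[R] N} (hf : Surjective f)
    (hker : IsSFinite S (ker f)) (hN : IsSFinite S N) : IsSFinite S M := by
  obtain ⟨t, ht, P, hP, htP⟩ := hN
  obtain ⟨s, hs, Q, hQ, hsQ⟩ := hker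
  obtain ⟨P₀, hP₀, rfl⟩ := hP.exists_fg_map_eq hf
  refine ⟨s * t, S.mul_mem hs ht, Q.map (ker f).subtype ⊔ P₀, (hQ.map _).sup hP₀, fun m => ?_⟩
  obtain ⟨y, hy, hfy⟩ := htP (f m)
  have hk : t • m - y ∈ ker f := by simp [hfy]
  rw [mul_smul, ← sub_add_cancel (t • m) y, smul_add]
  exact add_mem (mem_sup_left ⟨_, hsQ ⟨_, hk⟩, rfl⟩) (mem_sup_right (P₀.smul_mem s hy))

theorem isSFinite_iff_isSFiniteIdeal (I : Ideal R) : IsSFinite S I ↔ IsSFiniteIdeal S I := by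
  constructor
  · rintro ⟨s, hs, P, hP, hsP⟩
    exact ⟨s, hs, P.map I.subtype, hP.map _, map_subtype_le I P,
      fun x hx => ⟨_, hsP ⟨x, hx⟩, rfl⟩⟩
  · rintro ⟨s, hs, J, hJ, hJI, hsJ⟩
    refine ⟨s, hs, Submodule.comap I.subtype J, fg_of_fg_map_injective _ I.injective_subtype ?_,
      fun x => hsJ x x.2⟩
    rwa [map_comap_subtype, inf_eq_right.mpr hJI]

end IsSFinite

section IsSFinitelyPresented

variable {R : Type*} [CommRing R] {S : Submonoid R} {M N : Type*}
  [AddCommGroup M] [Module R M] [AddCommGroup N] [Module R N]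

/-- Schanuel-type lemma: with `f : Rⁿ → N` the given presentation and `p : Rᵐ → M` onto,
lift `f` along `g` to `h` and `g ∘ p` along `f` to `q`; then `(y, c) ↦ h y + p c - h (q c)` maps
`ker f × Rᵐ` onto `ker g`. -/
theorem IsSFinitelyPresented.isSFinite_ker [Module.Finite R M] (hN : IsSFinitelyPresented S N)
    {g : M →ₗ[R] N} (hg : Surjective g) : IsSFinite S (ker g) := by
  obtain ⟨n, f, hf, hker⟩ := hN
  obtain ⟨m, p, hp⟩ := Module.Finite.exists_fin' R M
  obtain ⟨h, hgh⟩ := Module.projective_lifting_property g f hg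
  obtain ⟨q, hfq⟩ := Module.projective_lifting_property f (g ∘ₗ p) hf
  have hh : ∀ z, g (h z) = f z := fun z => congr($hgh z)
  have hq : ∀ c, f (q c) = g (p c) := fun c => congr($hfq c)
  have hψ : ∀ x, ((h ∘ₗ (ker f).subtype).coprod (p - h ∘ₗ q)) x ∈ ker g := by
    rintro ⟨⟨y, hy⟩, c⟩
    simp [hh, hq, mem_ker.mp hy]
  refine (hker.prod (IsSFinite.of_finite S)).of_surjective (codRestrict _ _ hψ) ?_
  rintro ⟨k, hk⟩
  obtain ⟨c, rfl⟩ := hp k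
  have hc : q c ∈ ker f := by rwa [mem_ker, hq]
  exact ⟨(⟨q c, hc⟩, c), Subtype.ext (by simp)⟩

theorem IsSFinitelyPresented.of_surjective (hM : IsSFinitelyPresented S M) {g : M →ₗ[R] N}
    (hg : Surjective g) (hker : IsSFinite S (ker g)) : IsSFinitelyPresented S N := by
  obtain ⟨n, f, hf, hkf⟩ := hM
  refine ⟨n, g ∘ₗ f, hg.comp hf, ?_⟩
  let r : ker (g ∘ₗ f) →ₗ[R] ker g := f.restrict fun _ hx => hx
  have hr : Surjective r := by
    rintro ⟨k, hk⟩
    obtain ⟨x, rfl⟩ := hf k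
    exact ⟨⟨x, hk⟩, rfl⟩
  have hkr : IsSFinite S (ker r) := by
    rw [show ker r = (ker f).comap (ker (g ∘ₗ f)).subtype from ker_restrict _]
    exact hkf.of_surjective _ (comapSubtypeEquivOfLe (ker_le_ker_comp f g)).symm.surjective
  exact IsSFinite.of_isSFinite_ker hr hkr hker

theorem isSFinitelyPresented_of_linearEquiv {n : ℕ} (e : (Fin n → R) ≃ₗ[R] M) :
    IsSFinitelyPresented S M := by
  refine ⟨n, e, e.surjective, ?_⟩
  rw [LinearEquiv.ker]
  exact IsSFinite.of_finite S

theorem IsSFinitelyPresented.prod (hM : IsSFinitelyPresented S M)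
    (hN : IsSFinitelyPresented S N) : IsSFinitelyPresented S (M × N) := by
  obtain ⟨n, f, hf, hkf⟩ := hM
  obtain ⟨m, g, hg, hkg⟩ := hN
  have hfree : IsSFinitelyPresented S ((Fin n → R) × (Fin m → R)) :=
    isSFinitelyPresented_of_linearEquiv
      (LinearEquiv.funCongrLeft R R finSumFinEquiv ≪≫ₗ
        LinearEquiv.sumArrowLequivProdArrow _ _ R R)
  refine hfree.of_surjective (g := f.prodMap g) (Prod.map_surjective.mpr ⟨hf, hg⟩) ?_
  have hmem : ∀ z, ((ker f).subtype.prodMap (ker g).subtype) z ∈ ker (f.prodMap g) := by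
    simp
  refine (hkf.prod hkg).of_surjective (codRestrict _ _ hmem) ?_
  rintro ⟨⟨x, y⟩, hxy⟩
  obtain ⟨hx, hy⟩ := Prod.mk_eq_zero.mp hxy
  exact ⟨(⟨x, hx⟩, ⟨y, hy⟩), rfl⟩

end IsSFinitelyPresented

section Sup

variable {R M : Type*} [CommRing R] [AddCommGroup M] [Module R M] {S : Submonoid R}

namespace Submodule

variable (N₁ N₂ : Submodule R M)

def addToSup : N₁ × N₂ →ₗ[R] ↥(N₁ ⊔ N₂) :=
  codRestrict _ (N₁.subtype.coprod N₂.subtype) fun x =>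
    add_mem (mem_sup_left x.1.2) (mem_sup_right x.2.2)

theorem addToSup_surjective : Surjective (addToSup N₁ N₂) := by
  rintro ⟨x, hx⟩
  obtain ⟨y, hy, z, hz, rfl⟩ := mem_sup.mp hx
  exact ⟨(⟨y, hy⟩, ⟨z, hz⟩), rfl⟩

@[simp]
theorem coe_addToSup (x : N₁ × N₂) : (addToSup N₁ N₂ x : M) = x.1 + x.2 := rfl

noncomputable def infEquivKerAddToSup : ↥(N₁ ⊓ N₂) ≃ₗ[R] ker (addToSup N₁ N₂) := by
  refine LinearEquiv.ofBijective (codRestrict _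
    ((inclusion inf_le_left).prod (-inclusion inf_le_right)) fun x => ?_) ⟨?_, ?_⟩
  · exact Subtype.ext (by simp)
  · intro x y hxy
    exact Subtype.ext congr(($hxy).1.1.1)
  · rintro ⟨⟨x, y⟩, hxy⟩
    have hyx : (y : M) = -x := eq_neg_of_add_eq_zero_right congr(($hxy).1)
    refine ⟨⟨x, x.2, ?_⟩, ?_⟩
    · simpa [hyx] using y.2
    · ext
      · rfl
      · exact hyx.symm

end Submodule

variable {N₁ N₂ : Submodule R M}

theorem IsSFinitelyPresented.sup (h₁ : IsSFinitelyPresented S N₁)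
    (h₂ : IsSFinitelyPresented S N₂) (h : IsSFinite S ↥(N₁ ⊓ N₂)) :
    IsSFinitelyPresented S ↥(N₁ ⊔ N₂) :=
  (h₁.prod h₂).of_surjective (addToSup_surjective N₁ N₂)
    ((isSFinite_congr (infEquivKerAddToSup N₁ N₂)).mp h)

theorem IsSFinitelyPresented.isSFinite_inf [Module.Finite R N₁] [Module.Finite R N₂]
    (h : IsSFinitelyPresented S ↥(N₁ ⊔ N₂)) : IsSFinite S ↥(N₁ ⊓ N₂) :=
  (isSFinite_congr (infEquivKerAddToSup N₁ N₂)).mpr (h.isSFinite_ker (addToSup_surjective N₁ N₂))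

theorem isSFinitelyPresented_span_singleton_iff (x : M) :
    IsSFinitelyPresented S ↥(R ∙ x) ↔ IsSFinite S (ker (toSpanSingleton R M x)) := by
  rw [LinearMap.span_singleton_eq_range, ← ker_rangeRestrict]
  exact ⟨fun h => h.isSFinite_ker (surjective_rangeRestrict _),
    (isSFinitelyPresented_of_linearEquiv (LinearEquiv.funUnique (Fin 1) R R)).of_surjective
      (surjective_rangeRestrict _)⟩

end Sup

theorem ker_toSpanSingleton_eq_colon {R : Type*} [CommRing R] (a : R) :
    ker (toSpanSingleton R R a) = (⊥ : Ideal R).colon (Ideal.span {a}) := by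
  ext r
  simp

theorem scoherent_iff_annihilator_and_inter {R : Type*} [CommRing R] (S : Submonoid R) :
    IsSCoherentRing R S ↔
      (∀ a : R, IsSFiniteIdeal S ((⊥ : Ideal R).colon (Ideal.span {a}))) ∧
        ∀ I J : Ideal R, I.FG → J.FG → IsSFiniteIdeal S (I ⊓ J) := by
  simp only [← ker_toSpanSingleton_eq_colon, ← isSFinite_iff_isSFiniteIdeal]
  constructor
  · intro hcoh
    refine ⟨fun a => ?_, fun I J hI hJ => ?_⟩
    · exact (isSFinitelyPresented_span_singleton_iff a).mp (hcoh _ (fg_span_singleton a))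
    · have := Module.Finite.iff_fg.mpr hI
      have := Module.Finite.iff_fg.mpr hJ
      exact (hcoh _ (Submodule.FG.sup hI hJ)).isSFinite_inf
  · rintro ⟨hann, hinf⟩ I hI
    induction I, hI using Submodule.fg_induction with
    | singleton a => exact (isSFinitelyPresented_span_singleton_iff a).mpr (hann a)
    | sup I J hI hJ hSI hSJ => exact hSI.sup hSJ (hinf I J hI hJ)
end

section
/- Let f : A → B be a ring homomorphism such that B is flat as an A-module, and let V be a multiplicative subset of A. If an A-module M is V-finite, then M ⊗_A B is f(V)-finite as a B-module. -/
theorem sfinite_base_change {A B : Type*} [CommRing A] [CommRing B] [Algebra A B]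
    [Module.Flat A B] (V : Submonoid A)
    (M : Type*) [AddCommGroup M] [Module A M] (h : IsSFinite V M) :
    IsSFinite (V.map (algebraMap A B).toMonoidHom) (TensorProduct A B M) := by
  obtain ⟨s, hs, N, hNfg, hN⟩ := h
  obtain ⟨S, hS⟩ := hNfg
  refine ⟨algebraMap A B s, ⟨s, hs, rfl⟩, N.baseChange B, ?_, ?_⟩
  · rw [← hS, Submodule.baseChange_span]
    exact Submodule.fg_span ((S.finite_toSet.image _))
  intro x
  induction x using TensorProduct.induction_on with
  | zero => simp
  | tmul b m =>
      have h1 : (algebraMap A B) s • b ⊗ₜ[A] m = (s • b) ⊗ₜ[A] m := by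
        rw [TensorProduct.smul_tmul', algebraMap_smul]
      rw [h1, TensorProduct.smul_tmul]
      exact Submodule.tmul_mem_baseChange_of_mem b (hN m)
  | add x y hx hy =>
      rw [smul_add]
      exact (N.baseChange B).add_mem hx hy
end

section
/- A finitely generated R-module M is c-S-finitely presented if and only if there is a finitely presented submodule N of M such that the localizations M_S and N_S are equal (the inclusion N → M localizes to an isomorphism). -/
namespace Submodule

section Localized

variable {R M N : Type*} [CommSemiring R] [AddCommMonoid M] [Module R M] [AddCommMonoid N]
  [Module R N] (A : Type*) [CommSemiring A] [Algebra R A] [Module A N] [IsScalarTower R A N]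
  (S : Submonoid R) [IsLocalization S A] (f : M →ₗ[R] N) [IsLocalizedModule S f]
  (P : Submodule R M)

theorem apply_mem_localized₀_iff {m : M} : f m ∈ P.localized₀ S f ↔ ∃ r ∈ S, r • m ∈ P := by
  constructor
  · rintro ⟨n, hn, t, ht⟩
    rw [← IsLocalizedModule.mk'_one S f m, IsLocalizedModule.mk'_eq_mk'_iff] at ht
    obtain ⟨c, hc⟩ := ht
    refine ⟨c * t, (c * t).2, ?_⟩
    have hct : ((c * t : S) : R) • m = (c : R) • n := by
      simpa [Submonoid.smul_def, mul_smul] using hc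
    exact hct ▸ P.smul_mem _ hn
  · rintro ⟨r, hr, hrm⟩
    exact ⟨r • m, hrm, ⟨r, hr⟩, by rw [IsLocalizedModule.mk'_eq_iff, map_smul]; rfl⟩

theorem localized'_eq_top_iff : P.localized' A S f = ⊤ ↔ ∀ m : M, ∃ r ∈ S, r • m ∈ P := by
  refine ⟨fun h m ↦ (P.apply_mem_localized₀_iff S f).mp ?_, fun h ↦ eq_top_iff.mpr ?_⟩
  · exact (h ▸ mem_top : f m ∈ P.localized' A S f)
  · rintro x -
    obtain ⟨⟨m, t⟩, rfl⟩ := IsLocalizedModule.mk'_surjective S f x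
    obtain ⟨r, hr, hrm⟩ := h m
    exact ⟨r • m, hrm, ⟨r, hr⟩ * t, IsLocalizedModule.mk'_cancel_left _ _ _ _⟩

end Localized

theorem exists_forall_smul_mem_of_forall_exists_smul_mem {R M : Type*} [CommSemiring R]
    [AddCommMonoid M] [Module R M] [Module.Finite R M] {S : Submonoid R} {P : Submodule R M}
    (h : ∀ m : M, ∃ r ∈ S, r • m ∈ P) : ∃ s ∈ S, ∀ m : M, s • m ∈ P := by
  classical
  obtain ⟨T, hT⟩ := Module.Finite.fg_top (R := R) (M := M)
  choose u huS hu using h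
  refine ⟨∏ x ∈ T, u x, S.prod_mem fun x _ ↦ huS x, fun m ↦ ?_⟩
  suffices span R (T : Set M) ≤ P.comap (LinearMap.lsmul R M (∏ x ∈ T, u x)) by
    exact this (hT ▸ mem_top)
  refine span_le.mpr fun x hx ↦ ?_
  rw [SetLike.mem_coe, mem_comap, LinearMap.lsmul_apply, ← Finset.mul_prod_erase T _ hx,
    mul_comm, mul_smul]
  exact P.smul_mem _ (hu x)

end Submodule

theorem cSfp_iff_localization_eq {R : Type*} [CommRing R] (S : Submonoid R)
    (M : Type*) [AddCommGroup M] [Module R M] (hM : Module.Finite R M) :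
    (∃ N : Submodule R M, Module.FinitePresentation R ↥N ∧ ∃ s ∈ S, ∀ m : M, s • m ∈ N) ↔
      ∃ N : Submodule R M, Module.FinitePresentation R ↥N ∧ Submodule.localized S N = ⊤ := by
  refine exists_congr fun N ↦ and_congr_right fun _ ↦ ?_
  rw [Submodule.localized'_eq_top_iff]
  exact ⟨fun ⟨s, hs, h⟩ m ↦ ⟨s, hs, h m⟩,
    Submodule.exists_forall_smul_mem_of_forall_exists_smul_mem⟩
end

section
/- A ring R is c-S-coherent (every S-finite ideal is c-S-finitely presented) if and only if for every finitely generated ideal I of R there is a finitely presented ideal J ⊆ I with I_S = J_S (i.e., the localizations at S coincide). -/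
/-- An ideal `I` is c-`S`-finitely presented: there is a finitely presented ideal `J` with
`s • I ⊆ J ⊆ I` for some `s ∈ S`. -/
def IsCSFinitelyPresentedIdeal {R : Type*} [CommRing R] (S : Submonoid R) (I : Ideal R) : Prop :=
  ∃ J : Ideal R, Module.FinitePresentation R ↥J ∧ J ≤ I ∧ ∃ s ∈ S, ∀ x ∈ I, s * x ∈ J

private lemma aux_prod {R : Type*} [CommRing R] (S : Submonoid R) (J : Ideal R) (fs : Finset R)
    (h : ∀ a ∈ fs, ∃ t ∈ S, t * a ∈ J) :
    ∃ t ∈ S, ∀ x ∈ Ideal.span (fs : Set R), t * x ∈ J := by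
  classical
  induction fs using Finset.induction_on with
  | empty =>
    refine ⟨1, S.one_mem, fun x hx => ?_⟩
    rw [Finset.coe_empty, Ideal.span_empty, Ideal.mem_bot] at hx
    simp [hx]
  | @insert a fs ha ih =>
    obtain ⟨ta, htaS, hta⟩ := h a (Finset.mem_insert_self a fs)
    obtain ⟨t, htS, ht⟩ := ih (fun b hb => h b (Finset.mem_insert_of_mem hb))
    refine ⟨ta * t, S.mul_mem htaS htS, fun x hx => ?_⟩
    rw [Finset.coe_insert, Ideal.span_insert] at hx
    obtain ⟨y, hy, z, hz, rfl⟩ := Submodule.mem_sup.mp hx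
    obtain ⟨c, rfl⟩ := Ideal.mem_span_singleton'.mp hy
    have h1 : ta * t * (c * a) = (t * c) * (ta * a) := by ring
    have h2 : ta * t * z = ta * (t * z) := by ring
    rw [mul_add, h1, h2]
    exact J.add_mem (J.mul_mem_left _ hta) (J.mul_mem_left _ (ht z hz))

private lemma mem_map_of_smul_mem {R : Type*} [CommRing R] (S : Submonoid R) (J : Ideal R)
    {s a : R} (hs : s ∈ S) (h : s * a ∈ J) :
    algebraMap R (Localization S) a ∈ Ideal.map (algebraMap R (Localization S)) J := by
  obtain ⟨u, hu⟩ := IsLocalization.map_units (Localization S) (⟨s, hs⟩ : S)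
  have : algebraMap R (Localization S) a =
      ↑u⁻¹ * algebraMap R (Localization S) (s * a) := by
    rw [map_mul, ← hu, ← mul_assoc, Units.inv_mul, one_mul]
  rw [this]
  exact Ideal.mul_mem_left _ _ (Ideal.mem_map_of_mem _ h)

private lemma exists_smul_mem_of_mem_map {R : Type*} [CommRing R] (S : Submonoid R) (J : Ideal R)
    {a : R} (h : algebraMap R (Localization S) a ∈ Ideal.map (algebraMap R (Localization S)) J) :
    ∃ t ∈ S, t * a ∈ J := by
  obtain ⟨⟨⟨x, hxJ⟩, ⟨c, hc⟩⟩, heq⟩ := (IsLocalization.mem_map_algebraMap_iff S _).mp h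
  simp only at heq
  rw [← map_mul] at heq
  obtain ⟨u, hu⟩ := (IsLocalization.eq_iff_exists S (Localization S)).mp heq
  refine ⟨u * c, S.mul_mem u.2 hc, ?_⟩
  have hrw : (u : R) * c * a = (u : R) * x := by
    rw [show (u : R) * c * a = (u : R) * (a * c) by ring, hu]
  rw [hrw]
  exact J.mul_mem_left _ hxJ

theorem cScoherent_iff_localization {R : Type*} [CommRing R] (S : Submonoid R) :
    (∀ I : Ideal R, IsSFiniteIdeal S I → IsCSFinitelyPresentedIdeal S I) ↔
      ∀ I : Ideal R, I.FG → ∃ J : Ideal R, J ≤ I ∧ Module.FinitePresentation R ↥J ∧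
        Ideal.map (algebraMap R (Localization S)) I
          = Ideal.map (algebraMap R (Localization S)) J := by
  constructor
  · intro H I hI
    obtain ⟨J, hJfp, hJI, s, hsS, hsI⟩ :=
      H I ⟨1, S.one_mem, I, hI, le_refl I, fun x hx => by simpa using hx⟩
    refine ⟨J, hJI, hJfp, le_antisymm ?_ (Ideal.map_mono hJI)⟩
    rw [Ideal.map_le_iff_le_comap]
    intro x hx
    exact Ideal.mem_comap.mpr (mem_map_of_smul_mem S J hsS (hsI x hx))
  · intro H I hI
    obtain ⟨s, hsS, J₀, hJ₀fg, hJ₀I, hsI⟩ := hI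
    obtain ⟨J, hJJ₀, hJfp, hmap⟩ := H J₀ hJ₀fg
    obtain ⟨fs, hfs⟩ := hJ₀fg
    have hmem : ∀ a ∈ fs, ∃ t ∈ S, t * a ∈ J := by
      intro a ha
      have haJ₀ : a ∈ J₀ := hfs ▸ Ideal.subset_span ha
      exact exists_smul_mem_of_mem_map S J (hmap ▸ Ideal.mem_map_of_mem _ haJ₀)
    obtain ⟨t, htS, ht⟩ := aux_prod S J fs hmem
    refine ⟨J, hJfp, hJJ₀.trans hJ₀I, t * s, S.mul_mem htS hsS, fun x hx => ?_⟩
    have : t * s * x = t * (s * x) := by ring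
    rw [this]
    exact ht _ (hfs ▸ hsI x hx)
end

section
/- Let N be an R-submodule of an R-module M, and let Sat_{S,M}(N) = f⁻¹(f(N)R_S) where f : M → M_S is the localization map. Then Sat_{S,M}(N) is S-finite if and only if N is S-finite and Sat_{S,M}(N) = (N :_M s) = {m ∈ M : sm ∈ N} for some s ∈ S. -/
/-- A submodule `N` of `M` is `S`-finite: `s • N ⊆ N' ⊆ N` for some finitely generated
submodule `N'` and `s ∈ S`. -/
def IsSFiniteSubmodule {R : Type*} [CommRing R] (S : Submonoid R) {M : Type*}
    [AddCommGroup M] [Module R M] (N : Submodule R M) : Prop :=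
  ∃ s ∈ S, ∃ N' : Submodule R M, N' ≤ N ∧ N'.FG ∧ ∀ x ∈ N, s • x ∈ N'

/-- The `S`-saturation of `N` in `M`: the preimage under `M → M_S` of the `R_S`-submodule of
`M_S` generated by the image of `N`. -/
noncomputable def SatS {R : Type*} [CommRing R] (S : Submonoid R) {M : Type*}
    [AddCommGroup M] [Module R M] (N : Submodule R M) : Submodule R M :=
  Submodule.comap (LocalizedModule.mkLinearMap S M)
    ((Submodule.localized S N).restrictScalars R)

lemma mem_satS {R : Type*} [CommRing R] (S : Submonoid R) {M : Type*}
    [AddCommGroup M] [Module R M] (N : Submodule R M) (x : M) :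
    x ∈ SatS S N ↔ ∃ t ∈ S, t • x ∈ N := by
  simp only [SatS, Submodule.mem_comap, Submodule.restrictScalars_mem,
    Submodule.mem_localized']
  constructor
  · rintro ⟨m, hm, s, hms⟩
    rw [← IsLocalizedModule.mk_eq_mk', LocalizedModule.mkLinearMap_apply] at hms
    have : LocalizedModule.mk x (1 : S) = LocalizedModule.mk m s := hms.symm
    rw [LocalizedModule.mk_eq] at this
    obtain ⟨u, hu⟩ := this
    refine ⟨(u : R) * (s : R), S.mul_mem u.2 s.2, ?_⟩
    have : (u * s) • x = u • m := by
      simpa [Submonoid.smul_def, mul_smul] using hu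
    rw [show ((u : R) * (s : R)) • x = (u * s) • x from rfl, this]
    exact N.smul_mem _ hm
  · rintro ⟨t, ht, hx⟩
    refine ⟨t • x, hx, ⟨t, ht⟩, ?_⟩
    rw [← IsLocalizedModule.mk_eq_mk']
    show LocalizedModule.mk (t • x) ⟨t, ht⟩ = LocalizedModule.mk x 1
    rw [LocalizedModule.mk_eq]
    exact ⟨1, by simp [Submonoid.smul_def]⟩

theorem sat_sfinite_iff {R : Type*} [CommRing R] (S : Submonoid R) {M : Type*}
    [AddCommGroup M] [Module R M] (N : Submodule R M) :
    IsSFiniteSubmodule S (SatS S N) ↔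
      IsSFiniteSubmodule S N ∧
        ∃ s ∈ S, SatS S N = Submodule.comap (LinearMap.lsmul R M s) N := by
  have hNle : N ≤ SatS S N := fun x hx => (mem_satS S N x).mpr ⟨1, S.one_mem, by simpa⟩
  constructor
  · rintro ⟨s, hs, N', hle, hfg, hsmul⟩
    -- find t ∈ S with t • N' ≤ N
    obtain ⟨gens, hgens⟩ := id hfg
    have hgen : ∀ x ∈ (gens : Set M), ∃ t ∈ S, t • x ∈ N := by
      intro x hx
      exact (mem_satS S N x).mp (hle (hgens ▸ Submodule.subset_span hx))
    choose tf htfS htf using hgen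
    -- t = product over gens
    classical
    set t : R := ∏ x ∈ gens.attach, tf x.1 x.2 with ht
    have htS : t ∈ S := S.prod_mem fun x _ => htfS x.1 x.2
    have htN' : ∀ y ∈ N', t • y ∈ N := by
      intro y hy
      have key : ∀ x ∈ (gens : Set M), t • x ∈ N := by
        intro x hx
        have := Finset.prod_erase_mul gens.attach (fun z => tf z.1 z.2)
          (Finset.mem_attach _ ⟨x, hx⟩)
        rw [ht, ← this, mul_smul]
        exact N.smul_mem _ (htf x hx)
      have : y ∈ Submodule.comap (LinearMap.lsmul R M t) N := by
        rw [← hgens] at hy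
        refine Submodule.span_le.mpr ?_ hy
        intro x hx
        exact key x hx
      exact this
    refine ⟨⟨s * t, S.mul_mem hs htS, Submodule.map (LinearMap.lsmul R M t) N',
        ?_, hfg.map _, ?_⟩, s * t, S.mul_mem hs htS, ?_⟩
    · rintro _ ⟨y, hy, rfl⟩
      exact htN' y hy
    · intro x hx
      exact ⟨s • x, hsmul x (hNle hx), by rw [mul_smul, smul_comm]; rfl⟩
    · apply le_antisymm
      · intro x hx
        simp only [Submodule.mem_comap, LinearMap.lsmul_apply]
        rw [mul_smul, smul_comm]
        exact htN' _ (hsmul x hx)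
      · intro x hx
        simp only [Submodule.mem_comap, LinearMap.lsmul_apply] at hx
        exact (mem_satS S N x).mpr ⟨s * t, S.mul_mem hs htS, hx⟩
  · rintro ⟨⟨s, hs, N', hle, hfg, hsmul⟩, u, hu, hSat⟩
    refine ⟨s * u, S.mul_mem hs hu, N', hle.trans hNle, hfg, ?_⟩
    intro x hx
    have hux : u • x ∈ N := by
      rw [hSat] at hx
      simpa using hx
    rw [mul_smul]
    exact hsmul _ hux
end
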